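/- Define for n ∈ ℕ the Laurent polynomial a_n(q) := (−1)^n q^{n(n+3)/2 − 1} Σ_{k=1}^{n+1} q^{k²} [n+k choose 2k−1]_q (the n-th Habiro cyclotomic coefficient of the mirror of the (2,5)-torus knot). Let p ≥ 3 be an odd integer and let e_p be a primitive p-th root of unity in ℂ. Then a_p(e_p) = −2 − Σ_{j=(p+1)/2}^{p−1} e_p^{j² − 1} [j choose 2j−1−p]_{e_p}. -/

import Mathlib

/-- Evaluation at `ζ : ℂ` of the Gaussian binomial coefficient `[n choose k]_q ∈ ℤ[q]`,
defined by the `q`-Pascal recursion, agreeing with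
`∏_{i=1}^{k} (1−q^{n−k+i})/(1−q^i)` for `k ≤ n` and with `0` for `k > n`. -/
def qbinom : ℕ → ℕ → ℂ → ℂ
  | _, 0, _ => 1
  | 0, _ + 1, _ => 0
  | n + 1, k + 1, ζ => qbinom n k ζ + ζ ^ (k + 1) * qbinom n (k + 1) ζ

/-- The `n`-th Habiro cyclotomic coefficient of the mirror of the `(2,5)`-torus knot,
`a_n(q) = (−1)^n q^{n(n+3)/2 − 1} Σ_{k=1}^{n+1} q^{k²} [n+k choose 2k−1]_q`,
evaluated at `ζ ≠ 0`. -/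
noncomputable def aCoef (n : ℕ) (ζ : ℂ) : ℂ :=
  (-1) ^ n * ζ ^ (((n * (n + 3) / 2 : ℕ) : ℤ) - 1) *
    ∑ k ∈ Finset.Icc 1 (n + 1), ζ ^ (k ^ 2) * qbinom (n + k) (2 * k - 1) ζ


/-! At a primitive `p`-th root of unity `e`, the `q`-Lucas theorem reduces `[p + k choose 2k - 1]_e`
to a Gaussian binomial of size `k`. Hence in `a_p(e)` the terms with `2 ≤ k ≤ (p - 1)/2` vanish,
`k = 1` and `k = p + 1` contribute `e` each, `k = p` contributes `[2p choose 2p - 1]_e = 0`, and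
the terms with `(p + 1)/2 ≤ k ≤ p - 1` become `e^{k²} [k choose 2k - 1 - p]_e`. The prefactor
`(-1)^p e^{p(p+3)/2 - 1}` is `-e⁻¹`. -/

open Finset

lemma qbinom_zero_right (n : ℕ) (ζ : ℂ) : qbinom n 0 ζ = 1 := by
  cases n <;> rfl

lemma qbinom_succ_succ (n k : ℕ) (ζ : ℂ) :
    qbinom (n + 1) (k + 1) ζ = qbinom n k ζ + ζ ^ (k + 1) * qbinom n (k + 1) ζ :=
  rfl

lemma qbinom_eq_zero_of_lt {n k : ℕ} (h : n < k) (ζ : ℂ) : qbinom n k ζ = 0 := by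
  induction n generalizing k with
  | zero => obtain ⟨k, rfl⟩ := Nat.exists_eq_add_of_lt h; rfl
  | succ n ih =>
    obtain ⟨k, rfl⟩ : ∃ j, k = j + 1 := ⟨k - 1, by omega⟩
    rw [qbinom_succ_succ, ih (by omega), ih (by omega), mul_zero, add_zero]

lemma qbinom_self (n : ℕ) (ζ : ℂ) : qbinom n n ζ = 1 := by
  induction n with
  | zero => rfl
  | succ n ih => rw [qbinom_succ_succ, ih, qbinom_eq_zero_of_lt n.lt_succ_self, mul_zero, add_zero]

lemma qbinom_succ_self (n : ℕ) (ζ : ℂ) : qbinom (n + 1) n ζ = ∑ i ∈ range (n + 1), ζ ^ i := by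
  induction n with
  | zero => simp [qbinom_zero_right]
  | succ n ih => rw [qbinom_succ_succ, ih, qbinom_self, sum_range_succ _ (n + 1), mul_one]

lemma qbinom_mul_prod_Icc (ζ : ℂ) {n k : ℕ} (h : k ≤ n) :
    qbinom n k ζ * ∏ i ∈ Icc 1 k, (1 - ζ ^ i) = ∏ i ∈ Icc (n - k + 1) n, (1 - ζ ^ i) := by
  induction n generalizing k with
  | zero =>
    obtain rfl : k = 0 := by omega
    simp [qbinom_zero_right]
  | succ n ih =>
    obtain _ | k := k
    · simp [qbinom_zero_right]
    have hIcc_one : Icc 1 (k + 1) = insert (k + 1) (Icc 1 k) :=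
      (insert_Icc_right_eq_Icc_add_one (by omega)).symm
    have hIcc_top : Icc (n + 1 - (k + 1) + 1) (n + 1) = insert (n + 1) (Icc (n - k + 1) n) := by
      rw [insert_Icc_right_eq_Icc_add_one (by omega)]; congr 1; omega
    rw [qbinom_succ_succ, hIcc_one, prod_insert (by simp), hIcc_top, prod_insert (by simp)]
    obtain hkn | rfl := Nat.lt_or_eq_of_le (Nat.le_of_succ_le_succ h)
    · have h₁ := ih hkn.le
      have h₂ := ih hkn
      have hIcc_bot : Icc (n - (k + 1) + 1) n = insert (n - k) (Icc (n - k + 1) n) := by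
        rw [insert_Icc_add_one_left_eq_Icc (by omega)]; congr 1; omega
      rw [hIcc_one, prod_insert (by simp), hIcc_bot, prod_insert (by simp)] at h₂
      have hpow : ζ ^ (k + 1) * ζ ^ (n - k) = ζ ^ (n + 1) := by rw [← pow_add]; congr 1; omega
      linear_combination (1 - ζ ^ (k + 1)) * h₁ + ζ ^ (k + 1) * h₂ -
        (∏ i ∈ Icc (n - k + 1) n, (1 - ζ ^ i)) * hpow
    · rw [qbinom_eq_zero_of_lt k.lt_succ_self, qbinom_self, Nat.sub_self]
      ring

section PrimitiveRoot

variable {p : ℕ} {e : ℂ} (he : IsPrimitiveRoot e p)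
include he

lemma IsPrimitiveRoot.qbinom_eq_zero {m : ℕ} (hm₀ : 0 < m) (hmp : m < p) : qbinom p m e = 0 := by
  have hden : ∏ i ∈ Icc 1 m, (1 - e ^ i) ≠ 0 := by
    refine prod_ne_zero_iff.mpr fun i hi ↦ sub_ne_zero.mpr ?_
    rw [mem_Icc] at hi
    exact (he.pow_ne_one_of_pos_of_lt (by omega) (by omega)).symm
  have hnum : ∏ i ∈ Icc (p - m + 1) p, (1 - e ^ i) = 0 :=
    prod_eq_zero (mem_Icc.mpr ⟨by omega, le_rfl⟩) (by rw [he.pow_eq_one, sub_self])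
  rw [← qbinom_mul_prod_Icc e hmp.le, mul_eq_zero] at hnum
  exact hnum.resolve_right hden

lemma IsPrimitiveRoot.qbinom_add_left {m : ℕ} (n : ℕ) (hm : m < p) :
    qbinom (p + n) m e = qbinom n m e := by
  induction n generalizing m with
  | zero =>
    obtain rfl | hm₀ := m.eq_zero_or_pos
    · rw [qbinom_zero_right, qbinom_zero_right]
    · rw [add_zero, he.qbinom_eq_zero hm₀ hm, qbinom_eq_zero_of_lt hm₀]
  | succ n ih =>
    obtain _ | m := m
    · rw [qbinom_zero_right, qbinom_zero_right]
    · rw [← add_assoc, qbinom_succ_succ, qbinom_succ_succ, ih (by omega), ih hm]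

lemma IsPrimitiveRoot.qbinom_add_add {n : ℕ} (hn : n < p) (k : ℕ) :
    qbinom (p + n) (p + k) e = qbinom n k e := by
  induction n generalizing k with
  | zero =>
    obtain _ | k := k
    · rw [add_zero, qbinom_self, qbinom_self]
    · rw [add_zero, qbinom_eq_zero_of_lt (by omega), qbinom_eq_zero_of_lt k.succ_pos]
  | succ n ih =>
    obtain _ | k := k
    · have hsucc : p + 0 = p - 1 + 1 := by omega
      rw [← add_assoc, hsucc, qbinom_succ_succ, ← hsucc, he.qbinom_add_left n (by omega),
        qbinom_eq_zero_of_lt (by omega), ih (by omega), add_zero, he.pow_eq_one, one_mul, zero_add,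
        qbinom_zero_right, qbinom_zero_right]
    · rw [← add_assoc, ← add_assoc, qbinom_succ_succ, qbinom_succ_succ, add_assoc p k 1,
        ih (by omega), ih (by omega), pow_add, he.pow_eq_one, one_mul]

lemma IsPrimitiveRoot.qbinom_add_self_two_mul_sub_one (hp : 2 ≤ p) :
    qbinom (p + p) (2 * p - 1) e = 0 := by
  rw [show p + p = 2 * p - 1 + 1 by omega, qbinom_succ_self, Nat.sub_add_cancel (by omega),
    geom_sum_eq (he.ne_one (by omega)), pow_mul', he.pow_eq_one, one_pow, sub_self, zero_div]

lemma IsPrimitiveRoot.aCoef_eq_neg_inv_mul (hodd : Odd p) :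
    aCoef p e = -e⁻¹ * ∑ k ∈ Icc 1 (p + 1), e ^ (k ^ 2) * qbinom (p + k) (2 * k - 1) e := by
  have hne : e ≠ 0 := he.ne_zero (by rintro rfl; simp at hodd)
  have hdvd : 2 ∣ p + 3 := by rcases hodd with ⟨m, rfl⟩; exact ⟨m + 2, by ring⟩
  have hexp : e ^ (((p * (p + 3) / 2 : ℕ) : ℤ) - 1) = e⁻¹ := by
    rw [zpow_sub₀ hne, zpow_natCast, zpow_one, Nat.mul_div_assoc p hdvd, pow_mul, he.pow_eq_one,
      one_pow, one_div]
  rw [aCoef, hodd.neg_one_pow, hexp, neg_one_mul]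

lemma IsPrimitiveRoot.sum_Icc_sq_pow_mul_qbinom (hp : 3 ≤ p) (hodd : Odd p) :
    ∑ k ∈ Icc 1 (p + 1), e ^ (k ^ 2) * qbinom (p + k) (2 * k - 1) e =
      e * (2 + ∑ j ∈ Icc ((p + 1) / 2) (p - 1), e ^ (j ^ 2 - 1) * qbinom j (2 * j - 1 - p) e) := by
  obtain ⟨m, rfl⟩ := hodd
  have hIcc_one : Icc 1 (2 * m) = Ioc 0 (2 * m) := Icc_add_one_left_eq_Ioc 0 _
  have hIcc_mid : Icc ((2 * m + 1 + 1) / 2) (2 * m + 1 - 1) = Ioc m (2 * m) := by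
    rw [show (2 * m + 1 + 1) / 2 = m + 1 by omega, Nat.add_sub_cancel]
    exact Icc_add_one_left_eq_Ioc m _
  rw [sum_Icc_succ_top (by omega), sum_Icc_succ_top (by omega), hIcc_one,
    ← sum_Ioc_consecutive _ (Nat.zero_le m) (by omega : m ≤ 2 * m),
    ← sum_Ioc_consecutive _ (Nat.zero_le 1) (by omega : 1 ≤ m), Nat.Ioc_succ_singleton, zero_add,
    sum_singleton, hIcc_mid, mul_add e, mul_sum]
  have hterm_one : e ^ (1 ^ 2) * qbinom (2 * m + 1 + 1) (2 * 1 - 1) e = e := by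
    rw [he.qbinom_add_left 1 (by omega), qbinom_self, one_pow, pow_one, mul_one]
  have hlow : ∑ k ∈ Ioc 1 m, e ^ (k ^ 2) * qbinom (2 * m + 1 + k) (2 * k - 1) e = 0 := by
    refine sum_eq_zero fun k hk ↦ ?_
    rw [mem_Ioc] at hk
    rw [he.qbinom_add_left k (by omega), qbinom_eq_zero_of_lt (by omega), mul_zero]
  have hhigh : ∀ k ∈ Ioc m (2 * m), e ^ (k ^ 2) * qbinom (2 * m + 1 + k) (2 * k - 1) e =
      e * (e ^ (k ^ 2 - 1) * qbinom k (2 * k - 1 - (2 * m + 1)) e) := by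
    intro k hk
    rw [mem_Ioc] at hk
    rw [← he.qbinom_add_add (show k < 2 * m + 1 by omega), ← mul_assoc, ← pow_succ',
      Nat.sub_add_cancel (Nat.one_le_pow _ _ (by omega))]
    congr 2
    omega
  have hterm_p :
      e ^ ((2 * m + 1) ^ 2) * qbinom (2 * m + 1 + (2 * m + 1)) (2 * (2 * m + 1) - 1) e = 0 := by
    rw [he.qbinom_add_self_two_mul_sub_one (by omega), mul_zero]
  have hterm_p_succ : e ^ ((2 * m + 1 + 1) ^ 2) *
      qbinom (2 * m + 1 + (2 * m + 1 + 1)) (2 * (2 * m + 1 + 1) - 1) e = e := by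
    rw [show 2 * (2 * m + 1 + 1) - 1 = 2 * m + 1 + (2 * m + 1 + 1) by omega, qbinom_self, mul_one,
      show (2 * m + 1 + 1) ^ 2 = (2 * m + 1) * (2 * m + 3) + 1 by ring, pow_succ, pow_mul,
      he.pow_eq_one, one_pow, one_mul]
  rw [hterm_one, hlow, sum_congr rfl hhigh, hterm_p, hterm_p_succ]
  ring

end PrimitiveRoot

theorem stmt17 (p : ℕ) (hp : 3 ≤ p) (hodd : Odd p) (e : ℂ) (he : IsPrimitiveRoot e p) :
    aCoef p e =
      -2 - ∑ j ∈ Finset.Icc ((p + 1) / 2) (p - 1),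
        e ^ (j ^ 2 - 1) * qbinom j (2 * j - 1 - p) e := by
  rw [he.aCoef_eq_neg_inv_mul hodd, he.sum_Icc_sq_pow_mul_qbinom hp hodd, ← mul_assoc, neg_mul,
    inv_mul_cancel₀ (he.ne_zero (by omega))]
  ring
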